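/- arXiv:2002.04826 — 3 statements merged into one kernel-verified Lean document; each statement's English description precedes it below -/
import Mathlib

section
/- Smith's rule (adjacent exchange lemma): Let jobs have processing times t : Fin n → ℝ with t k > 0 and weights w : Fin n → ℝ with w k > 0. For a permutation σ of Fin n, define the total weighted completion time TWC(σ) = Σ_k w(σ k) · (Σ_{j ≤ k} t(σ j)). If σ places a job q immediately before a job p with t q / w q > t p / w p, then the permutation σ' obtained from σ by swapping these two adjacent positions satisfies TWC(σ') < TWC(σ). -/
/-- Total weighted completion time of a schedule `σ` (permutation of `Fin n`):
the job in position `k` completes at `∑_{j ≤ k} t (σ j)`. -/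
def TWC {n : ℕ} (t w : Fin n → ℝ) (σ : Equiv.Perm (Fin n)) : ℝ :=
  ∑ k : Fin n, w (σ k) * ∑ j ∈ Finset.Iic k, t (σ j)

/-- Smith's rule, adjacent-exchange lemma: if `σ` places job `q = σ k`
immediately before job `p = σ (k+1)` with `t q / w q > t p / w p`, then
swapping the two adjacent positions strictly decreases the total weighted
completion time. -/
theorem stmt1 {n : ℕ} (t w : Fin n → ℝ)
    (ht : ∀ k, 0 < t k) (hw : ∀ k, 0 < w k)
    (σ : Equiv.Perm (Fin n)) (k : Fin n) (hk : (k : ℕ) + 1 < n)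
    (hratio : t (σ ⟨(k : ℕ) + 1, hk⟩) / w (σ ⟨(k : ℕ) + 1, hk⟩)
        < t (σ k) / w (σ k)) :
    TWC t w ((Equiv.swap k ⟨(k : ℕ) + 1, hk⟩).trans σ) < TWC t w σ := by
  set k' : Fin n := ⟨(k : ℕ) + 1, hk⟩ with hk'def
  have hklt : k < k' := by
    simp [hk'def, Fin.lt_def]
  have hkk' : k ≠ k' := ne_of_lt hklt
  set σ' : Equiv.Perm (Fin n) := (Equiv.swap k k').trans σ with hσ'def
  have hσ'k : σ' k = σ k' := by simp [hσ'def]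
  have hσ'k' : σ' k' = σ k := by simp [hσ'def]
  have hσ'ne : ∀ m, m ≠ k → m ≠ k' → σ' m = σ m := by
    intro m h1 h2
    simp [hσ'def, Equiv.swap_apply_of_ne_of_ne h1 h2]
  have hPP' : ∀ m, m ≠ k → m ≠ k' →
      (∑ j ∈ Finset.Iic m, t (σ' j)) = ∑ j ∈ Finset.Iic m, t (σ j) := by
    intro m h1 h2
    have hm : m < k ∨ k' < m := by
      rcases lt_or_ge m k' with h | h
      · left
        have hle : (m : ℕ) ≤ (k : ℕ) := Nat.lt_succ_iff.mp (by exact_mod_cast h)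
        exact lt_of_le_of_ne (Fin.le_def.mpr hle) h1
      · right; exact lt_of_le_of_ne h (Ne.symm h2)
    have key : ∀ j : Fin n, j ≤ m → Equiv.swap k k' j ≤ m := by
      intro j hj
      rcases eq_or_ne j k with rfl | h1'
      · rcases hm with h | h
        · exact absurd hj (not_le.mpr h)
        · simpa [Equiv.swap_apply_left] using h.le
      rcases eq_or_ne j k' with rfl | h2'
      · rcases hm with h | h
        · exact absurd hj (not_le.mpr (h.trans hklt))
        · simpa [Equiv.swap_apply_right] using (hklt.trans h).le
      · rwa [Equiv.swap_apply_of_ne_of_ne h1' h2']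
    refine Finset.sum_equiv (Equiv.swap k k') (fun j => ?_) (fun j _ => ?_)
    · simp only [Finset.mem_Iic]
      constructor
      · exact key j
      · intro h
        have := key _ h
        rwa [Equiv.swap_apply_self] at this
    · simp [hσ'def]
  have hsub : TWC t w σ - TWC t w σ' =
      ∑ m : Fin n, (w (σ m) * ∑ j ∈ Finset.Iic m, t (σ j)
        - w (σ' m) * ∑ j ∈ Finset.Iic m, t (σ' j)) := by
    unfold TWC
    rw [Finset.sum_sub_distrib]
  have hpair : (∑ m : Fin n, (w (σ m) * ∑ j ∈ Finset.Iic m, t (σ j)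
        - w (σ' m) * ∑ j ∈ Finset.Iic m, t (σ' j)))
      = (w (σ k) * ∑ j ∈ Finset.Iic k, t (σ j)
          - w (σ' k) * ∑ j ∈ Finset.Iic k, t (σ' j))
        + (w (σ k') * ∑ j ∈ Finset.Iic k', t (σ j)
          - w (σ' k') * ∑ j ∈ Finset.Iic k', t (σ' j)) := by
    rw [← Finset.sum_subset (Finset.subset_univ ({k, k'} : Finset (Fin n)))
        (by
          intro x _ hx
          simp only [Finset.mem_insert, Finset.mem_singleton, not_or] at hx
          rw [hσ'ne x hx.1 hx.2, hPP' x hx.1 hx.2]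
          ring)]
    rw [Finset.sum_insert (by simp [hkk']), Finset.sum_singleton]
  have hIic : Finset.Iic k' = insert k' (Finset.Iic k) := by
    ext j
    simp only [Finset.mem_Iic, Finset.mem_insert, Fin.le_def, Fin.ext_iff, hk'def]
    omega
  have hknot : k' ∉ Finset.Iic k := by
    simp only [Finset.mem_Iic]
    exact not_le.mpr hklt
  have hkIio : k ∉ Finset.Iio k := by simp
  have hIick : Finset.Iic k = insert k (Finset.Iio k) := (Finset.Iio_insert k).symm
  have hS : (∑ j ∈ Finset.Iio k, t (σ' j)) = ∑ j ∈ Finset.Iio k, t (σ j) := by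
    refine Finset.sum_congr rfl fun j hj => ?_
    simp only [Finset.mem_Iio] at hj
    rw [hσ'ne j (ne_of_lt hj) (ne_of_lt (hj.trans hklt))]
  have hmul : t (σ k') * w (σ k) < t (σ k) * w (σ k') :=
    (div_lt_div_iff₀ (hw _) (hw _)).mp hratio
  have hdiff : 0 < TWC t w σ - TWC t w σ' := by
    rw [hsub, hpair, hIic, Finset.sum_insert hknot, Finset.sum_insert hknot,
      hIick, Finset.sum_insert hkIio, Finset.sum_insert hkIio, hσ'k, hσ'k', hS]
    nlinarith [hmul]
  linarith [hdiff]
end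

section
/- Smith's rule (optimality): For single-machine scheduling with processing times t k > 0 and weights w k > 0, any permutation σ that sorts jobs in non-decreasing order of the ratio t k / w k minimizes the total weighted completion time TWC(σ) = Σ_k w(σ k) · (Σ_{j ≤ k} t(σ j)) over all permutations. -/
/-!
Expanding completion times, `TWC π = ∑_{a, b} [a is scheduled no later than b] · t a · w b`.
For every pair of distinct jobs `a, b` exactly one of `t a * w b` and `t b * w a` occurs, and a
schedule sorted by `t / w` always picks the smaller one, as `t a / w a ≤ t b / w b` iff
`t a * w b ≤ t b * w a`. Summing over ordered pairs counts each pair twice.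
-/

open Finset

section Smith

variable {n : ℕ} (t w : Fin n → ℝ)

def delayCost (π : Equiv.Perm (Fin n)) (a b : Fin n) : ℝ :=
  if π.symm a ≤ π.symm b then t a * w b else 0

theorem TWC_eq_sum_delayCost (π : Equiv.Perm (Fin n)) :
    TWC t w π = ∑ b, ∑ a, delayCost t w π a b := by
  have hinner : ∀ k, w (π k) * ∑ j ∈ Iic k, t (π j) = ∑ a, delayCost t w π a (π k) := by
    intro k
    rw [mul_sum, ← Equiv.sum_comp π]
    simp only [delayCost, Equiv.symm_apply_apply]
    rw [← sum_filter]
    exact sum_congr (by ext; simp) fun _ _ => mul_comm _ _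
  simp only [TWC, hinner]
  exact Equiv.sum_comp π (fun b => ∑ a, delayCost t w π a b)

theorem two_mul_TWC (π : Equiv.Perm (Fin n)) :
    2 * TWC t w π = ∑ b, ∑ a, (delayCost t w π a b + delayCost t w π b a) := by
  simp only [sum_add_distrib, TWC_eq_sum_delayCost]
  rw [sum_comm (f := fun b a => delayCost t w π b a)]
  ring

theorem delayCost_add_swap_le {σ : Equiv.Perm (Fin n)}
    (hσ : ∀ a b, σ.symm a ≤ σ.symm b → t a * w b ≤ t b * w a)
    (τ : Equiv.Perm (Fin n)) (a b : Fin n) :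
    delayCost t w σ a b + delayCost t w σ b a ≤ delayCost t w τ a b + delayCost t w τ b a := by
  rcases eq_or_ne a b with rfl | hab
  · simp [delayCost]
  have hσab : σ.symm a ≠ σ.symm b := σ.symm.injective.ne hab
  have hτab : τ.symm a ≠ τ.symm b := τ.symm.injective.ne hab
  unfold delayCost
  rcases hσab.lt_or_gt with hσ' | hσ' <;> rcases hτab.lt_or_gt with hτ' | hτ' <;>
    simp [hσ'.le, hσ'.not_ge, hτ'.le, hτ'.not_ge, hσ _ _ hσ'.le]

theorem mul_le_mul_swap_of_sorted {σ : Equiv.Perm (Fin n)} (hw : ∀ k, 0 < w k)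
    (hsorted : ∀ i j : Fin n, i ≤ j → t (σ i) / w (σ i) ≤ t (σ j) / w (σ j))
    (a b : Fin n) (hab : σ.symm a ≤ σ.symm b) : t a * w b ≤ t b * w a := by
  simpa [div_le_div_iff₀ (hw a) (hw b)] using hsorted _ _ hab

end Smith

theorem stmt2_general {n : ℕ} (t w : Fin n → ℝ)
    (hw : ∀ k, 0 < w k)
    (σ : Equiv.Perm (Fin n))
    (hsorted : ∀ i j : Fin n, i ≤ j → t (σ i) / w (σ i) ≤ t (σ j) / w (σ j)) :
    ∀ τ : Equiv.Perm (Fin n), TWC t w σ ≤ TWC t w τ := by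
  intro τ
  have hσ := mul_le_mul_swap_of_sorted t w hw hsorted
  have h : 2 * TWC t w σ ≤ 2 * TWC t w τ := by
    rw [two_mul_TWC, two_mul_TWC]
    exact sum_le_sum fun b _ => sum_le_sum fun a _ => delayCost_add_swap_le t w hσ τ a b
  linarith

/-- Smith's rule (optimality): any schedule that sorts the jobs in
non-decreasing order of the ratio `t k / w k` minimizes the total weighted
completion time over all schedules. -/
theorem stmt2 {n : ℕ} (t w : Fin n → ℝ)
    (ht : ∀ k, 0 < t k) (hw : ∀ k, 0 < w k)
    (σ : Equiv.Perm (Fin n))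
    (hsorted : ∀ i j : Fin n, i ≤ j → t (σ i) / w (σ i) ≤ t (σ j) / w (σ j)) :
    ∀ τ : Equiv.Perm (Fin n), TWC t w σ ≤ TWC t w τ :=
  stmt2_general t w hw σ hsorted
end

section
/- Minimum-time property of bang-then-cruise: among all absolutely continuous speed profiles v : [0,T] → ℝ with v(0) = v0, 0 ≤ v(t) ≤ vmax, and v̇(t) ≤ umax almost everywhere, satisfying ∫₀^T v(t) dt = L_CZ, the minimal terminal time T equals t_a + (L_CZ - d_a)/vmax where t_a = (vmax - v0)/umax and d_a = (vmax² - v0²)/(2·umax), assuming 0 ≤ v0 ≤ vmax, umax > 0, vmax > 0, and L_CZ ≥ d_a. -/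
/-!
The acceleration bound and the speed cap give `v t ≤ min (v0 + umax t) vmax` pointwise, so in
time `T` an admissible profile covers at most the distance of the bang-then-cruise profile. That
distance is below `dₐ ≤ L_CZ` before the cruise speed is reached and grows at rate `vmax`
afterwards, so it reaches `L_CZ` exactly at `T*`; and bang-then-cruise is itself admissible.
-/

/-- Admissible speed profile on `[0, T]`: continuous (absolute continuity),
initial speed `v0`, speeds in `[0, vmax]`, and acceleration bounded by `umax`
(in the integrated form `v t - v s ≤ umax (t - s)`, which is equivalent to
`v̇ ≤ umax` a.e. for absolutely continuous `v`), covering distance `L_CZ`. -/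
def Admissible (v0 vmax umax LCZ T : ℝ) (v : ℝ → ℝ) : Prop :=
  ContinuousOn v (Set.Icc 0 T) ∧ v 0 = v0 ∧
    (∀ t ∈ Set.Icc 0 T, 0 ≤ v t ∧ v t ≤ vmax) ∧
    (∀ s t, 0 ≤ s → s ≤ t → t ≤ T → v t - v s ≤ umax * (t - s)) ∧
    (∫ t in (0 : ℝ)..T, v t) = LCZ

open Set intervalIntegral

noncomputable section

def bangCruise (v0 vmax umax t : ℝ) : ℝ := min (v0 + umax * t) vmax

def accelTime (v0 vmax umax : ℝ) : ℝ := (vmax - v0) / umax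

def accelDist (v0 vmax umax : ℝ) : ℝ := (vmax ^ 2 - v0 ^ 2) / (2 * umax)

def minTime (v0 vmax umax LCZ : ℝ) : ℝ :=
  accelTime v0 vmax umax + (LCZ - accelDist v0 vmax umax) / vmax

end

section BangCruise

variable {v0 vmax umax : ℝ}

theorem continuous_bangCruise : Continuous (bangCruise v0 vmax umax) := by
  unfold bangCruise; fun_prop

theorem bangCruise_zero (hle : v0 ≤ vmax) : bangCruise v0 vmax umax 0 = v0 := by
  simp [bangCruise, hle]

theorem bangCruise_le (t : ℝ) : bangCruise v0 vmax umax t ≤ vmax := min_le_right _ _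

theorem bangCruise_nonneg (hv0 : 0 ≤ v0) (hu : 0 ≤ umax) (hv : 0 ≤ vmax) {t : ℝ}
    (ht : 0 ≤ t) : 0 ≤ bangCruise v0 vmax umax t :=
  le_min (by positivity) hv

theorem bangCruise_sub_le (hu : 0 ≤ umax) {s t : ℝ} (hst : s ≤ t) :
    bangCruise v0 vmax umax t - bangCruise v0 vmax umax s ≤ umax * (t - s) := by
  have hd : 0 ≤ umax * (t - s) := mul_nonneg hu (sub_nonneg.2 hst)
  have : bangCruise v0 vmax umax t ≤ bangCruise v0 vmax umax s + umax * (t - s) :=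
    calc bangCruise v0 vmax umax t = min (v0 + umax * s + umax * (t - s)) vmax := by
          rw [bangCruise]; ring_nf
      _ ≤ min (v0 + umax * s + umax * (t - s)) (vmax + umax * (t - s)) :=
          min_le_min_left _ (by linarith)
      _ = bangCruise v0 vmax umax s + umax * (t - s) := min_add_add_right _ _ _
  linarith

theorem bangCruise_of_le_accelTime (hu : 0 < umax) {t : ℝ} (ht : t ≤ accelTime v0 vmax umax) :
    bangCruise v0 vmax umax t = v0 + umax * t := by
  rw [accelTime, le_div_iff₀ hu] at ht
  exact min_eq_left (by linarith)

theorem bangCruise_of_accelTime_le (hu : 0 < umax) {t : ℝ} (ht : accelTime v0 vmax umax ≤ t) :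
    bangCruise v0 vmax umax t = vmax := by
  rw [accelTime, div_le_iff₀ hu] at ht
  exact min_eq_right (by linarith)

theorem integral_const_add_mul_id (c u a b : ℝ) :
    ∫ t in a..b, (c + u * t) = c * (b - a) + u * (b ^ 2 - a ^ 2) / 2 := by
  rw [integral_add intervalIntegrable_const (intervalIntegrable_id.const_mul u), integral_const,
    integral_const_mul, integral_id, smul_eq_mul]
  ring

theorem integral_bangCruise_of_le_accelTime (hu : 0 < umax) (hle : v0 ≤ vmax) {T : ℝ}
    (hT : T ≤ accelTime v0 vmax umax) :
    ∫ t in (0 : ℝ)..T, bangCruise v0 vmax umax t = v0 * T + umax * T ^ 2 / 2 := by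
  have hta : 0 ≤ accelTime v0 vmax umax := div_nonneg (sub_nonneg.2 hle) hu.le
  rw [integral_congr fun t ht ↦ bangCruise_of_le_accelTime hu
    (ht.2.trans (max_le hta hT)), integral_const_add_mul_id]
  ring

theorem integral_bangCruise_of_accelTime_le (hu : 0 < umax) (hle : v0 ≤ vmax) {T : ℝ}
    (hT : accelTime v0 vmax umax ≤ T) :
    ∫ t in (0 : ℝ)..T, bangCruise v0 vmax umax t =
      accelDist v0 vmax umax + vmax * (T - accelTime v0 vmax umax) := by
  set ta := accelTime v0 vmax umax
  have hcruise : ∫ t in ta..T, bangCruise v0 vmax umax t = vmax * (T - ta) := by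
    rw [integral_congr fun t ht ↦ bangCruise_of_accelTime_le hu
      ((le_min le_rfl hT).trans ht.1), integral_const, smul_eq_mul, mul_comm]
  have hint := (continuous_bangCruise (v0 := v0) (vmax := vmax) (umax := umax)).intervalIntegrable
    (μ := MeasureTheory.volume)
  rw [← integral_add_adjacent_intervals (hint 0 ta) (hint ta T),
    integral_bangCruise_of_le_accelTime hu hle le_rfl, hcruise, accelDist]
  simp only [ta, accelTime]
  field_simp
  ring

end BangCruise

section MinimumTime

variable {v0 vmax umax LCZ T : ℝ}

theorem le_bangCruise_of_admissible {v : ℝ → ℝ} (h : Admissible v0 vmax umax LCZ T v) {t : ℝ}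
    (ht : t ∈ Icc 0 T) : v t ≤ bangCruise v0 vmax umax t := by
  obtain ⟨-, h0, hbd, hacc, -⟩ := h
  exact le_min (by linarith [hacc 0 t le_rfl ht.1 ht.2]) (hbd t ht).2

theorem le_integral_bangCruise_of_admissible {v : ℝ → ℝ} (hT : 0 ≤ T)
    (h : Admissible v0 vmax umax LCZ T v) :
    LCZ ≤ ∫ t in (0 : ℝ)..T, bangCruise v0 vmax umax t :=
  h.2.2.2.2 ▸ integral_mono_on hT (h.1.intervalIntegrable_of_Icc hT)
    (continuous_bangCruise.intervalIntegrable _ _) fun _ ht ↦ le_bangCruise_of_admissible h ht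

theorem integral_bangCruise_lt_accelDist (hv0 : 0 ≤ v0) (hu : 0 < umax) (hle : v0 ≤ vmax)
    (hT0 : 0 ≤ T) (hT : T < accelTime v0 vmax umax) :
    ∫ t in (0 : ℝ)..T, bangCruise v0 vmax umax t < accelDist v0 vmax umax := by
  rw [integral_bangCruise_of_le_accelTime hu hle hT.le, accelDist, lt_div_iff₀ (by positivity)]
  rw [accelTime, lt_div_iff₀ hu] at hT
  nlinarith [mul_nonneg hu.le hT0]

theorem minTime_le_of_le_integral_bangCruise (hv0 : 0 ≤ v0) (hu : 0 < umax) (hle : v0 ≤ vmax)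
    (hv : 0 < vmax) (hL : accelDist v0 vmax umax ≤ LCZ) (hT0 : 0 ≤ T)
    (h : LCZ ≤ ∫ t in (0 : ℝ)..T, bangCruise v0 vmax umax t) :
    minTime v0 vmax umax LCZ ≤ T := by
  rcases lt_or_ge T (accelTime v0 vmax umax) with hT | hT
  · exact absurd (h.trans_lt (integral_bangCruise_lt_accelDist hv0 hu hle hT0 hT)) hL.not_gt
  · rw [integral_bangCruise_of_accelTime_le hu hle hT] at h
    rw [minTime, ← le_sub_iff_add_le', div_le_iff₀ hv]
    linarith

theorem accelTime_le_minTime (hv : 0 < vmax) (hL : accelDist v0 vmax umax ≤ LCZ) :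
    accelTime v0 vmax umax ≤ minTime v0 vmax umax LCZ :=
  le_add_of_nonneg_right (div_nonneg (sub_nonneg.2 hL) hv.le)

theorem integral_bangCruise_minTime (hu : 0 < umax) (hle : v0 ≤ vmax) (hv : 0 < vmax)
    (hL : accelDist v0 vmax umax ≤ LCZ) :
    ∫ t in (0 : ℝ)..minTime v0 vmax umax LCZ, bangCruise v0 vmax umax t = LCZ := by
  rw [integral_bangCruise_of_accelTime_le hu hle (accelTime_le_minTime hv hL), minTime]
  field_simp
  ring

theorem admissible_bangCruise (hv0 : 0 ≤ v0) (hle : v0 ≤ vmax) (hu : 0 < umax) (hv : 0 < vmax)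
    (hL : accelDist v0 vmax umax ≤ LCZ) :
    Admissible v0 vmax umax LCZ (minTime v0 vmax umax LCZ) (bangCruise v0 vmax umax) :=
  ⟨continuous_bangCruise.continuousOn, bangCruise_zero hle,
    fun _ ht ↦ ⟨bangCruise_nonneg hv0 hu.le hv.le ht.1, bangCruise_le _⟩,
    fun _ _ _ hst _ ↦ bangCruise_sub_le hu.le hst, integral_bangCruise_minTime hu hle hv hL⟩

end MinimumTime

/-- Minimum-time property of the bang-then-cruise profile: the minimal time
to cover `L_CZ` is `T* = tₐ + (L_CZ - dₐ)/vmax` with `tₐ = (vmax - v0)/umax`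
and `dₐ = (vmax² - v0²)/(2 umax)`: every admissible profile needs time at
least `T*`, and some admissible profile achieves exactly `T*`. -/
theorem stmt7 (v0 vmax umax LCZ : ℝ)
    (hv0 : 0 ≤ v0) (hle : v0 ≤ vmax) (hu : 0 < umax) (hv : 0 < vmax)
    (hL : (vmax ^ 2 - v0 ^ 2) / (2 * umax) ≤ LCZ)
    (Tstar : ℝ)
    (hT : Tstar = (vmax - v0) / umax
        + (LCZ - (vmax ^ 2 - v0 ^ 2) / (2 * umax)) / vmax) :
    (∀ T : ℝ, 0 ≤ T → ∀ v : ℝ → ℝ,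
        Admissible v0 vmax umax LCZ T v → Tstar ≤ T) ∧
      ∃ v : ℝ → ℝ, Admissible v0 vmax umax LCZ Tstar v := by
  subst hT
  exact ⟨fun T hT0 v h ↦ minTime_le_of_le_integral_bangCruise hv0 hu hle hv hL hT0
      (le_integral_bangCruise_of_admissible hT0 h),
    bangCruise v0 vmax umax, admissible_bangCruise hv0 hle hu hv hL⟩
end
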